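/- arXiv:1907.07999 — 2 statements merged into one kernel-verified Lean document; each statement's English description precedes it below -/
import Mathlib

section
/- Let G be a finite group and n a positive integer. Suppose G is generated by its elements of order n, and the commutator subgroup [G,G] contains an element of order n. Then there exist an odd number L and elements g_1, ..., g_L of G, each of order n, such that g_1 g_2 ... g_L equals the identity. -/
/-!
Let `S` be the set of elements of order `n`; it is closed under inversion. The products of
words of even length in `S` form a subgroup `E`. Since `S` generates `G`, every `a` is the product
of a word `w` in `S`, and `a⁻¹` of the reversed inverted word, of the same length; hence a
commutator `a b a⁻¹ b⁻¹` is a word of length `2 (|w_a| + |w_b|)` and `[G, G] ≤ E`. If `g ∈ [G, G]`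
has order `n`, then `g⁻¹` is an even word and `g` followed by that word is an odd word with
product `1`.
-/

namespace Subgroup

variable {G : Type*} [Group G] {S : Set G}

theorem exists_list_prod_eq_of_mem_closure_of_inv_mem (hS : ∀ x ∈ S, x⁻¹ ∈ S) {g : G}
    (hg : g ∈ closure S) : ∃ l : List G, (∀ x ∈ l, x ∈ S) ∧ l.prod = g := by
  have hSinv : S ∪ S⁻¹ = S := Set.union_eq_left.2 fun x hx => by simpa using hS _ hx
  rw [← mem_toSubmonoid, closure_toSubmonoid, hSinv] at hg
  exact Submonoid.exists_list_of_mem_closure hg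

theorem forall_mem_reverse_map_inv (hS : ∀ x ∈ S, x⁻¹ ∈ S) {l : List G} (hl : ∀ x ∈ l, x ∈ S) :
    ∀ x ∈ (l.map (·⁻¹)).reverse, x ∈ S := by
  simp only [List.mem_reverse, List.mem_map]
  rintro _ ⟨y, hy, rfl⟩
  exact hS y (hl y hy)

def evenWordClosure (S : Set G) (hS : ∀ x ∈ S, x⁻¹ ∈ S) : Subgroup G where
  carrier := {g | ∃ l : List G, Even l.length ∧ (∀ x ∈ l, x ∈ S) ∧ l.prod = g}
  one_mem' := ⟨[], by simp, by simp, rfl⟩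
  mul_mem' := by
    rintro _ _ ⟨l₁, even₁, hl₁, rfl⟩ ⟨l₂, even₂, hl₂, rfl⟩
    refine ⟨l₁ ++ l₂, by simpa using even₁.add even₂, ?_, List.prod_append⟩
    simpa only [List.mem_append] using fun x hx => hx.elim (hl₁ x) (hl₂ x)
  inv_mem' := by
    rintro _ ⟨l, hEven, hl, rfl⟩
    exact ⟨_, by simpa using hEven, forall_mem_reverse_map_inv hS hl, (List.prod_inv_reverse l).symm⟩

theorem commutator_le_evenWordClosure (hS : ∀ x ∈ S, x⁻¹ ∈ S) (hgen : closure S = ⊤) :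
    _root_.commutator G ≤ evenWordClosure S hS := by
  rw [_root_.commutator_def, commutator_le]
  intro a _ b _
  obtain ⟨la, hla, rfl⟩ := exists_list_prod_eq_of_mem_closure_of_inv_mem hS (hgen ▸ mem_top a)
  obtain ⟨lb, hlb, rfl⟩ := exists_list_prod_eq_of_mem_closure_of_inv_mem hS (hgen ▸ mem_top b)
  refine ⟨la ++ lb ++ (la.map (·⁻¹)).reverse ++ (lb.map (·⁻¹)).reverse, ?_, ?_, ?_⟩
  · simp only [List.length_append, List.length_reverse, List.length_map]
    exact ⟨la.length + lb.length, by ring⟩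
  · have hla' := forall_mem_reverse_map_inv hS hla
    have hlb' := forall_mem_reverse_map_inv hS hlb
    simp only [List.mem_append]
    rintro x (((hx | hx) | hx) | hx)
    exacts [hla x hx, hlb x hx, hla' x hx, hlb' x hx]
  · simp only [List.prod_append, ← List.prod_inv_reverse, commutatorElement_def]

end Subgroup

theorem stmt_2_general (G : Type*) [Group G] (n : ℕ)
    (hgen : Subgroup.closure {g : G | orderOf g = n} = ⊤)
    (hcomm : ∃ g ∈ commutator G, orderOf g = n) :
    ∃ l : List G, Odd l.length ∧ (∀ g ∈ l, orderOf g = n) ∧ l.prod = 1 := by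
  have hS : ∀ x ∈ {g : G | orderOf g = n}, x⁻¹ ∈ {g : G | orderOf g = n} := by
    simp [orderOf_inv]
  obtain ⟨g, hg, hgn⟩ := hcomm
  obtain ⟨l, hEven, hl, hprod⟩ :=
    Subgroup.commutator_le_evenWordClosure hS hgen (inv_mem hg)
  refine ⟨g :: l, by simpa using hEven.add_one, ?_, by simp [hprod]⟩
  simpa [hgn] using hl

theorem stmt_2 (G : Type*) [Group G] [Finite G] (n : ℕ) (hn : 0 < n)
    (hgen : Subgroup.closure {g : G | orderOf g = n} = ⊤)
    (hcomm : ∃ g ∈ commutator G, orderOf g = n) :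
    ∃ l : List G, Odd l.length ∧ (∀ g ∈ l, orderOf g = n) ∧ l.prod = 1 :=
  stmt_2_general G n hgen hcomm
end

section
/- Let G be a finite group that is not a p-group (i.e., at least two distinct primes divide |G|). Suppose that for every prime p dividing |G|, G is generated by its elements of order p. Then G is perfect, i.e., [G,G] = G. -/
/-!
A generator of order `p` maps into the abelianization to an element killed by `p`, so if
`G` is generated by elements of order `p` then the exponent of `G ⧸ [G, G]` divides `p`.
Doing this for two distinct primes forces that exponent to be `1`, i.e. `G ⧸ [G, G]` is trivial.
-/

theorem Abelianization.exponent_dvd_of_closure_eq_top {G : Type*} [Group G] {s : Set G} {n : ℕ}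
    (hs : Subgroup.closure s = ⊤) (hpow : ∀ g ∈ s, g ^ n = 1) :
    Monoid.exponent (Abelianization G) ∣ n := by
  have hker : ((powMonoidHom n).comp Abelianization.of).ker = ⊤ :=
    top_unique <| hs.ge.trans <| (Subgroup.closure_le _).mpr fun g hg => by
      simp [← map_pow, hpow g hg]
  refine Monoid.exponent_dvd_iff_forall_pow_eq_one.mpr fun a => ?_
  obtain ⟨g, rfl⟩ := QuotientGroup.mk_surjective a
  exact MonoidHom.mem_ker.mp (hker ▸ Subgroup.mem_top g)

theorem stmt_3_general (G : Type*) [Group G]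
    (hnp : ∃ p q : ℕ, p.Prime ∧ q.Prime ∧ p ≠ q ∧ p ∣ Nat.card G ∧ q ∣ Nat.card G)
    (hgen : ∀ p : ℕ, p.Prime → p ∣ Nat.card G →
      Subgroup.closure {g : G | orderOf g = p} = ⊤) :
    commutator G = ⊤ := by
  obtain ⟨p, q, hp, hq, hpq, hpd, hqd⟩ := hnp
  have hexp {r : ℕ} (hr : r.Prime) (hrd : r ∣ Nat.card G) :
      Monoid.exponent (Abelianization G) ∣ r :=
    Abelianization.exponent_dvd_of_closure_eq_top (hgen r hr hrd)
      fun g hg => hg ▸ pow_orderOf_eq_one g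
  have hone : Monoid.exponent (Abelianization G) = 1 :=
    Nat.eq_one_of_dvd_coprimes ((Nat.coprime_primes hp hq).mpr hpq) (hexp hp hpd) (hexp hq hqd)
  exact QuotientGroup.subsingleton_iff.mp (Monoid.exp_eq_one_iff.mp hone)

theorem stmt_3 (G : Type*) [Group G] [Finite G]
    (hnp : ∃ p q : ℕ, p.Prime ∧ q.Prime ∧ p ≠ q ∧ p ∣ Nat.card G ∧ q ∣ Nat.card G)
    (hgen : ∀ p : ℕ, p.Prime → p ∣ Nat.card G →
      Subgroup.closure {g : G | orderOf g = p} = ⊤) :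
    commutator G = ⊤ :=
  stmt_3_general G hnp hgen
end
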